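/- For every k ∈ (0, 1/2), the Bernoulli reparameterization f_k is differentiable at every point of ℝ, and its derivative satisfies 0 < f_k'(θ) ≤ 1 for all θ ∈ ℝ (so the outer logistic branches of f_k never have slope exceeding that of the middle identity branch). -/

import Mathlib

/-!
Each outer branch of `f_k` is a logistic sigmoid `g` of rate `1 / (k (1 - k))`, so
`g' = g (1 - g) / (k (1 - k))`; it meets the identity at `k` (resp. `1 - k`) with value `k`
(resp. `1 - k`) and hence slope `1`. On the left branch `0 < g ≤ k`, on the right `1 - k < g < 1`,
and `t (1 - t) ≤ k (1 - k)` whenever `t` is at least as far from `1/2` as `k`, so `0 < g' ≤ 1`.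
-/

open Real Set

theorem hasDerivAt_ite_le {f g : ℝ → ℝ} {f' g' a x : ℝ}
    (hf : x ≤ a → HasDerivAt f f' x) (hg : a ≤ x → HasDerivAt g g' x)
    (hfg : f a = g a) (hfg' : x = a → f' = g') :
    HasDerivAt (fun y => if y ≤ a then f y else g y) (if x ≤ a then f' else g') x := by
  rcases lt_trichotomy x a with h | rfl | h
  · rw [if_pos h.le]
    refine (hf h.le).congr_of_eventuallyEq ?_
    filter_upwards [Iio_mem_nhds h] with y hy
    exact if_pos hy.le
  · rw [if_pos le_rfl]
    have hl : HasDerivWithinAt (fun y => if y ≤ x then f y else g y) f' (Iic x) x :=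
      (hf le_rfl).hasDerivWithinAt.congr (fun y hy => if_pos hy) (if_pos le_rfl)
    have hr : HasDerivWithinAt (fun y => if y ≤ x then f y else g y) f' (Ici x) x := by
      refine (hfg' rfl ▸ hg le_rfl).hasDerivWithinAt.congr (fun y hy => ?_) (by simp [hfg])
      rcases (mem_Ici.mp hy).eq_or_lt with rfl | hxy
      · simp [hfg]
      · exact if_neg (not_le.mpr hxy)
    simpa using hl.union hr
  · rw [if_neg (not_le.mpr h)]
    refine (hg h.le).congr_of_eventuallyEq ?_
    filter_upwards [Ioi_mem_nhds h] with y hy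
    exact if_neg (not_le.mpr hy)

noncomputable def logisticBranch (C a b θ : ℝ) : ℝ := (1 + C * exp (-θ / a + b))⁻¹

section logisticBranch

variable {C a b θ : ℝ}

theorem logisticBranch_pos (hC : 0 ≤ C) : 0 < logisticBranch C a b θ := by
  unfold logisticBranch; positivity

theorem logisticBranch_lt_one (hC : 0 < C) : logisticBranch C a b θ < 1 :=
  inv_lt_one_of_one_lt₀ (lt_add_of_pos_right _ (by positivity))

theorem hasDerivAt_logisticBranch (hC : 0 ≤ C) (ha : a ≠ 0) :
    HasDerivAt (logisticBranch C a b)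
      (logisticBranch C a b θ * (1 - logisticBranch C a b θ) / a) θ := by
  have hu : HasDerivAt (fun θ => -θ / a + b) (-1 / a) θ := by
    simpa using ((hasDerivAt_id θ).neg.div_const a).add_const b
  have hpos : 0 < 1 + C * exp (-θ / a + b) := by positivity
  refine (((hu.exp.const_mul C).const_add 1).inv hpos.ne').congr_deriv ?_
  unfold logisticBranch
  field_simp
  ring

theorem logisticBranch_of_mul_eq (ha : a ≠ 0) (hθ : a * b = θ) :
    logisticBranch C a b θ = (1 + C)⁻¹ := by
  rw [← hθ, logisticBranch, neg_div, mul_div_cancel_left₀ b ha, neg_add_cancel, exp_zero, mul_one]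

theorem logisticBranch_le (hC : 0 ≤ C) (ha : 0 < a) (hθ : θ ≤ a * b) :
    logisticBranch C a b θ ≤ (1 + C)⁻¹ := by
  have : 1 ≤ exp (-θ / a + b) :=
    one_le_exp (by rw [neg_div]; linarith [(div_le_iff₀' ha).mpr hθ])
  unfold logisticBranch
  gcongr
  exact le_mul_of_one_le_right hC this

theorem lt_logisticBranch (hC : 0 < C) (ha : 0 < a) (hθ : a * b < θ) :
    (1 + C)⁻¹ < logisticBranch C a b θ := by
  have : exp (-θ / a + b) < 1 :=
    exp_lt_one_iff.mpr (by rw [neg_div]; linarith [(lt_div_iff₀' ha).mpr hθ])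
  unfold logisticBranch
  gcongr
  exact mul_lt_of_lt_one_right hC this

end logisticBranch

theorem mul_one_sub_le_mul_one_sub {t k : ℝ} (hk : k ≤ 1 / 2) (htk : t ≤ k ∨ 1 - k ≤ t) :
    t * (1 - t) ≤ k * (1 - k) := by
  rcases htk with htk | htk <;> nlinarith

theorem mul_one_sub_div_mem_Ioc {t k : ℝ} (ht0 : 0 < t) (ht1 : t < 1) (hk0 : 0 < k)
    (hk : k ≤ 1 / 2) (htk : t ≤ k ∨ 1 - k ≤ t) :
    t * (1 - t) / (k * (1 - k)) ∈ Ioc 0 1 := by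
  have ha : 0 < k * (1 - k) := mul_pos hk0 (by linarith)
  exact ⟨div_pos (mul_pos ht0 (sub_pos.mpr ht1)) ha,
    (div_le_one ha).mpr (mul_one_sub_le_mul_one_sub hk htk)⟩

noncomputable def bernoulliReparam (k θ : ℝ) : ℝ :=
  if θ ≤ k then logisticBranch ((1 - k) / k) (k * (1 - k)) (1 / (1 - k)) θ
  else if θ ≤ 1 - k then θ
  else logisticBranch (k / (1 - k)) (k * (1 - k)) (1 / k) θ

noncomputable def bernoulliReparamDeriv (k θ : ℝ) : ℝ :=
  if θ ≤ k then
    logisticBranch ((1 - k) / k) (k * (1 - k)) (1 / (1 - k)) θ *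
      (1 - logisticBranch ((1 - k) / k) (k * (1 - k)) (1 / (1 - k)) θ) / (k * (1 - k))
  else if θ ≤ 1 - k then 1
  else
    logisticBranch (k / (1 - k)) (k * (1 - k)) (1 / k) θ *
      (1 - logisticBranch (k / (1 - k)) (k * (1 - k)) (1 / k) θ) / (k * (1 - k))

section bernoulliReparam

variable {k θ : ℝ}

theorem logisticBranch_left_le (hk0 : 0 < k) (hk1 : k < 1) (hθ : θ ≤ k) :
    logisticBranch ((1 - k) / k) (k * (1 - k)) (1 / (1 - k)) θ ≤ k := by
  have h1k : 0 < 1 - k := sub_pos.mpr hk1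
  calc _ ≤ (1 + (1 - k) / k)⁻¹ := logisticBranch_le (div_pos h1k hk0).le (mul_pos hk0 h1k)
          (by rwa [mul_one_div, mul_div_cancel_right₀ k h1k.ne'])
    _ = k := by field_simp; ring

theorem logisticBranch_left_self (hk0 : 0 < k) (hk1 : k < 1) :
    logisticBranch ((1 - k) / k) (k * (1 - k)) (1 / (1 - k)) k = k := by
  have h1k : 0 < 1 - k := sub_pos.mpr hk1
  calc _ = (1 + (1 - k) / k)⁻¹ := logisticBranch_of_mul_eq (mul_pos hk0 h1k).ne'
          (by rw [mul_one_div, mul_div_cancel_right₀ k h1k.ne'])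
    _ = k := by field_simp; ring

theorem lt_logisticBranch_right (hk0 : 0 < k) (hk1 : k < 1) (hθ : 1 - k < θ) :
    1 - k < logisticBranch (k / (1 - k)) (k * (1 - k)) (1 / k) θ := by
  have h1k : 0 < 1 - k := sub_pos.mpr hk1
  calc 1 - k = (1 + k / (1 - k))⁻¹ := by field_simp; ring
    _ < _ := lt_logisticBranch (div_pos hk0 h1k) (mul_pos hk0 h1k)
          (by rwa [mul_one_div, mul_div_cancel_left₀ _ hk0.ne'])

theorem logisticBranch_right_self (hk0 : 0 < k) (hk1 : k < 1) :
    logisticBranch (k / (1 - k)) (k * (1 - k)) (1 / k) (1 - k) = 1 - k := by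
  have h1k : 0 < 1 - k := sub_pos.mpr hk1
  calc _ = (1 + k / (1 - k))⁻¹ := logisticBranch_of_mul_eq (mul_pos hk0 h1k).ne'
          (by rw [mul_one_div, mul_div_cancel_left₀ _ hk0.ne'])
    _ = 1 - k := by field_simp; ring

theorem hasDerivAt_bernoulliReparam (hk0 : 0 < k) (hk1 : k < 1 / 2) (θ : ℝ) :
    HasDerivAt (bernoulliReparam k) (bernoulliReparamDeriv k θ) θ := by
  have hk : k < 1 - k := by linarith
  have h1k : 0 < 1 - k := by linarith
  have ha : k * (1 - k) ≠ 0 := (mul_pos hk0 h1k).ne'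
  have hleft := logisticBranch_left_self hk0 (by linarith)
  have hright := logisticBranch_right_self hk0 (by linarith)
  refine hasDerivAt_ite_le
    (fun _ => hasDerivAt_logisticBranch (div_pos h1k hk0).le ha)
    (fun _ => hasDerivAt_ite_le (fun _ => hasDerivAt_id' θ)
      (fun _ => hasDerivAt_logisticBranch (div_pos hk0 h1k).le ha) hright.symm ?_)
    (by rw [if_pos hk.le, hleft]) ?_
  · rintro rfl
    rw [hright]
    field_simp
    ring
  · rintro rfl
    rw [if_pos hk.le, hleft, div_self ha]

theorem bernoulliReparamDeriv_mem_Ioc (hk0 : 0 < k) (hk1 : k < 1 / 2) (θ : ℝ) :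
    bernoulliReparamDeriv k θ ∈ Ioc 0 1 := by
  have h1k : 0 < 1 - k := by linarith
  unfold bernoulliReparamDeriv
  split_ifs with hθk hθk'
  · exact mul_one_sub_div_mem_Ioc (logisticBranch_pos (div_pos h1k hk0).le)
      (logisticBranch_lt_one (div_pos h1k hk0)) hk0 hk1.le
      (.inl (logisticBranch_left_le hk0 (by linarith) hθk))
  · exact ⟨one_pos, le_rfl⟩
  · exact mul_one_sub_div_mem_Ioc (logisticBranch_pos (div_pos hk0 h1k).le)
      (logisticBranch_lt_one (div_pos hk0 h1k)) hk0 hk1.le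
      (.inr (lt_logisticBranch_right hk0 (by linarith) (not_le.mp hθk')).le)

end bernoulliReparam

/-- **Derivative bounds of the Bernoulli reparameterization.**
For every k ∈ (0, 1/2), the Bernoulli reparameterization f_k is differentiable
at every point of ℝ and its derivative satisfies 0 < f_k'(θ) ≤ 1 everywhere. -/
theorem bernoulli_reparam_deriv_bounds
    (k : ℝ) (hk0 : 0 < k) (hk1 : k < 1/2) :
    Differentiable ℝ (fun θ : ℝ =>
      if θ ≤ k then
        (1 + ((1 - k) / k) * Real.exp (-θ / (k * (1 - k)) + 1 / (1 - k)))⁻¹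
      else if θ ≤ 1 - k then θ
      else
        (1 + (k / (1 - k)) * Real.exp (-θ / (k * (1 - k)) + 1 / k))⁻¹) ∧
    ∀ θ : ℝ,
      0 < deriv (fun θ : ℝ =>
        if θ ≤ k then
          (1 + ((1 - k) / k) * Real.exp (-θ / (k * (1 - k)) + 1 / (1 - k)))⁻¹
        else if θ ≤ 1 - k then θ
        else
          (1 + (k / (1 - k)) * Real.exp (-θ / (k * (1 - k)) + 1 / k))⁻¹) θ ∧
      deriv (fun θ : ℝ =>
        if θ ≤ k then
          (1 + ((1 - k) / k) * Real.exp (-θ / (k * (1 - k)) + 1 / (1 - k)))⁻¹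
        else if θ ≤ 1 - k then θ
        else
          (1 + (k / (1 - k)) * Real.exp (-θ / (k * (1 - k)) + 1 / k))⁻¹) θ ≤ 1 := by
  show Differentiable ℝ (bernoulliReparam k) ∧
    ∀ θ, deriv (bernoulliReparam k) θ ∈ Ioc 0 1
  refine ⟨fun θ => (hasDerivAt_bernoulliReparam hk0 hk1 θ).differentiableAt, fun θ => ?_⟩
  rw [(hasDerivAt_bernoulliReparam hk0 hk1 θ).deriv]
  exact bernoulliReparamDeriv_mem_Ioc hk0 hk1 θ
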